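/- arXiv:2206.12184 — 2 statements merged into one kernel-verified Lean document; each statement's English description precedes it below -/
import Mathlib

section
/- Let X be a Poisson random variable with mean α/m. Then for every n≥0, E[(mX)_{n,λ}] = m^n φ_{n,λ/m}(α/m), i.e., e^{-α/m} Σ_{k=0}^∞ (mk)_{n,λ} (α/m)^k / k! = m^n φ_{n,λ/m}(α/m), where φ_{n,μ}(x) is the degenerate Bell polynomial. -/
open Finset

/-- Degenerate falling factorial `(x)_{n,λ} = x(x-λ)⋯(x-(n-1)λ)`. -/
noncomputable def dfall (lam x : ℝ) (n : ℕ) : ℝ := ∏ i ∈ Finset.range n, (x - i * lam)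

/-- Ordinary falling factorial `(x)_n = x(x-1)⋯(x-n+1)`. -/
noncomputable def ffall (x : ℝ) (n : ℕ) : ℝ := ∏ i ∈ Finset.range n, (x - i)

/-
Writing `e_μ(t) = (1 + μt)^{1/μ}`, expand `e^{x(e_μ(t) - 1)} = e^{-x} ∑ₖ xᵏ/k! (1 + μt)^{k/μ}`.
The `n`-th derivative of `(1 + μt)^{k/μ}` is `(k)_{n,μ} (1 + μt)^{k/μ - n}`, and on the region
`1/2 < 1 + μt < 2` the differentiated series are dominated by `C yᵏ/k!`, so they may be
differentiated termwise. At `t = 0` this gives the degenerate Dobinski formula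
`φ_{n,μ}(x) = e^{-x} ∑ₖ (k)_{n,μ} xᵏ/k!`; the theorem is its case `μ = λ/m`, `x = α/m`, combined
with the scaling `(mk)_{n,λ} = mⁿ (k)_{n,λ/m}`.
-/

open Real
open scoped Nat

lemma dfall_succ (μ x : ℝ) (n : ℕ) : dfall μ x (n + 1) = dfall μ x n * (x - n * μ) :=
  prod_range_succ _ n

lemma dfall_mul_mul (c μ x : ℝ) (n : ℕ) : dfall (c * μ) (c * x) n = c ^ n * dfall μ x n := by
  induction n with
  | zero => simp [dfall]
  | succ n ih => rw [dfall_succ, dfall_succ, ih]; ring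

lemma abs_dfall_natCast_le (μ : ℝ) (k n : ℕ) : |dfall μ k n| ≤ n ! * exp (k + n * |μ|) := by
  have hfactor : ∀ i ∈ range n, |(k : ℝ) - i * μ| ≤ k + n * |μ| := fun i hi => by
    have hin : (i : ℝ) ≤ n := by exact_mod_cast (mem_range.1 hi).le
    calc |(k : ℝ) - i * μ| ≤ |(k : ℝ)| + |i * μ| := abs_sub _ _
      _ = k + i * |μ| := by rw [abs_mul, Nat.abs_cast, Nat.abs_cast]
      _ ≤ k + n * |μ| := by gcongr
  calc |dfall μ k n| = ∏ i ∈ range n, |(k : ℝ) - i * μ| := abs_prod _ _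
    _ ≤ ∏ _i ∈ range n, ((k : ℝ) + n * |μ|) := prod_le_prod (fun _ _ => abs_nonneg _) hfactor
    _ = ((k : ℝ) + n * |μ|) ^ n := by rw [prod_const, card_range]
    _ ≤ n ! * exp (k + n * |μ|) :=
      (div_le_iff₀' (by positivity)).1 (pow_div_factorial_le_exp _ (by positivity) n)

lemma rpow_le_exp_abs {b : ℝ} (e : ℝ) (h₁ : 1 / 2 ≤ b) (h₂ : b ≤ 2) : b ^ e ≤ exp |e| := by
  have hb : 0 < b := by linarith
  have hinv : b⁻¹ ≤ 2 := by rw [inv_le_comm₀ hb two_pos]; linarith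
  have hlog : |log b| ≤ 1 :=
    abs_le.2 ⟨by linarith [one_sub_inv_le_log_of_pos hb], by linarith [log_le_sub_one_of_pos hb]⟩
  rw [rpow_def_of_pos hb, exp_le_exp]
  calc log b * e ≤ |log b| * |e| := (le_abs_self _).trans (abs_mul _ _).le
    _ ≤ 1 * |e| := by gcongr
    _ = |e| := one_mul _

/-- The `n`-th derivative in `t` of `xᵏ/k! · e_μ(t)ᵏ = xᵏ/k! · (1 + μt)^{k/μ}`. -/
noncomputable def bellTerm (μ x : ℝ) (n k : ℕ) (t : ℝ) : ℝ :=
  x ^ k / k ! * dfall μ k n * (1 + μ * t) ^ ((k : ℝ) / μ - n)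

section bellTerm

variable {μ : ℝ} (x : ℝ)

lemma bellTerm_apply_zero (n k : ℕ) : bellTerm μ x n k 0 = dfall μ k n * x ^ k / k ! := by
  rw [bellTerm, mul_zero, add_zero, one_rpow]
  ring

lemma tsum_bellTerm_zero {t : ℝ} (ht : 0 < 1 + μ * t) :
    ∑' k, bellTerm μ x 0 k t = exp (x * (1 + μ * t) ^ (1 / μ)) := by
  rw [exp_eq_exp_ℝ, ← (NormedSpace.expSeries_div_hasSum_exp _).tsum_eq]
  refine tsum_congr fun k => ?_
  rw [bellTerm, dfall, prod_range_zero, mul_pow, ← rpow_natCast ((1 + μ * t) ^ (1 / μ)),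
    ← rpow_mul ht.le, Nat.cast_zero, sub_zero, one_div_mul_eq_div]
  ring

lemma hasDerivAt_bellTerm (hμ : μ ≠ 0) (n k : ℕ) {t : ℝ} (ht : 0 < 1 + μ * t) :
    HasDerivAt (bellTerm μ x n k) (bellTerm μ x (n + 1) k t) t := by
  have hbase : HasDerivAt (fun t => 1 + μ * t) μ t := by
    simpa using ((hasDerivAt_id t).const_mul μ).const_add 1
  refine ((hbase.rpow_const (p := (k : ℝ) / μ - n) (Or.inl ht.ne')).const_mul
    (x ^ k / k ! * dfall μ k n)).congr_deriv ?_
  have hexp : (k : ℝ) / μ - ↑(n + 1) = (k : ℝ) / μ - n - 1 := by push_cast; ring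
  have hμk : μ * ((k : ℝ) / μ - n) = k - n * μ := by field_simp
  rw [bellTerm, dfall_succ, hexp, ← hμk]
  ring

lemma exists_summable_bound_bellTerm (hμ : μ ≠ 0) (n : ℕ) :
    ∃ u : ℕ → ℝ, Summable u ∧
      ∀ k t, 1 / 2 ≤ 1 + μ * t → 1 + μ * t ≤ 2 → ‖bellTerm μ x n k t‖ ≤ u k := by
  have hμ' : 0 < |μ| := abs_pos.2 hμ
  refine ⟨fun k => n ! * exp (n * |μ| + n) * ((|x| * exp (1 + 1 / |μ|)) ^ k / k !),
    (summable_pow_div_factorial _).mul_left _, fun k t h₁ h₂ => ?_⟩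
  have hexp : |(k : ℝ) / μ - n| ≤ k / |μ| + n := by
    calc |(k : ℝ) / μ - n| ≤ |(k : ℝ) / μ| + |(n : ℝ)| := abs_sub _ _
      _ = k / |μ| + n := by rw [abs_div, Nat.abs_cast, Nat.abs_cast]
  have hpow : (1 + μ * t) ^ ((k : ℝ) / μ - n) ≤ exp (k / |μ| + n) :=
    (rpow_le_exp_abs _ h₁ h₂).trans (exp_le_exp.2 hexp)
  have hsplit : exp (k + n * |μ|) * exp (k / |μ| + n) =
      exp (n * |μ| + n) * exp (k * (1 + 1 / |μ|)) := by
    rw [← exp_add, ← exp_add]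
    congr 1
    field_simp
    ring
  calc ‖bellTerm μ x n k t‖
      = |x| ^ k / k ! * |dfall μ k n| * (1 + μ * t) ^ ((k : ℝ) / μ - n) := by
        rw [bellTerm, norm_eq_abs, abs_mul, abs_mul, abs_div, abs_pow, Nat.abs_cast,
          abs_of_pos (rpow_pos_of_pos (by linarith) _)]
    _ ≤ |x| ^ k / k ! * (n ! * exp (k + n * |μ|)) * exp (k / |μ| + n) := by
        gcongr
        exact abs_dfall_natCast_le μ k n
    _ = n ! * exp (n * |μ| + n) * ((|x| * exp (1 + 1 / |μ|)) ^ k / k !) := by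
        rw [mul_pow, ← exp_nat_mul]
        linear_combination (|x| ^ k / k ! * n !) * hsplit

end bellTerm

theorem iteratedDeriv_exp_mul_rpow_sub_one {μ : ℝ} (x : ℝ) (hμ : μ ≠ 0) (n : ℕ) :
    iteratedDeriv n (fun t => exp (x * ((1 + μ * t) ^ (1 / μ) - 1))) 0 =
      exp (-x) * ∑' k : ℕ, dfall μ k n * x ^ k / k ! := by
  set s := Metric.ball (0 : ℝ) (1 / (2 * |μ|))
  have hs : ∀ t ∈ s, 1 / 2 ≤ 1 + μ * t ∧ 1 + μ * t ≤ 2 := fun t ht => by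
    have hμt : |μ * t| ≤ 1 / 2 := by
      rw [Metric.mem_ball, dist_zero_right, norm_eq_abs, lt_div_iff₀ (by positivity)] at ht
      rw [abs_mul]; linarith
    constructor <;> linarith [abs_le.1 hμt]
  have h0 : (0 : ℝ) ∈ s := Metric.mem_ball_self (by positivity)
  have hiter : ∀ n : ℕ, Set.EqOn (iteratedDeriv n fun t => exp (x * ((1 + μ * t) ^ (1 / μ) - 1)))
      (fun t => exp (-x) * ∑' k, bellTerm μ x n k t) s := by
    intro n
    induction n with
    | zero =>
      intro t ht
      simp only [iteratedDeriv_zero]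
      rw [tsum_bellTerm_zero x (by linarith [(hs t ht).1]), ← exp_add]
      congr 1
      ring
    | succ n ih =>
      intro t ht
      obtain ⟨u, hu, hbound⟩ := exists_summable_bound_bellTerm x hμ (n + 1)
      obtain ⟨u₀, hu₀, hbound₀⟩ := exists_summable_bound_bellTerm x hμ n
      have hderiv : HasDerivAt (fun t => ∑' k, bellTerm μ x n k t)
          (∑' k, bellTerm μ x (n + 1) k t) t :=
        hasDerivAt_tsum_of_isPreconnected hu Metric.isOpen_ball (convex_ball _ _).isPreconnected
          (fun k y hy => hasDerivAt_bellTerm x hμ n k (by linarith [(hs y hy).1]))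
          (fun k y hy => hbound k y (hs y hy).1 (hs y hy).2) h0
          (hu₀.of_norm_bounded fun k => hbound₀ k 0 (by norm_num) (by norm_num)) ht
      rw [iteratedDeriv_succ, (ih.eventuallyEq_of_mem (Metric.isOpen_ball.mem_nhds ht)).deriv_eq,
        (hderiv.const_mul _).deriv]
  rw [hiter n h0]
  simp only [bellTerm_apply_zero]

theorem stmt2_general (m : ℕ) (hm : 0 < m) (α lam : ℝ) (hlam : lam ≠ 0)
    (phi : ℕ → ℝ)
    (hphi : ∀ n : ℕ, iteratedDeriv n
        (fun t : ℝ => Real.exp ((α / m) * ((1 + (lam / m) * t) ^ ((m : ℝ) / lam) - 1))) 0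
      = phi n) :
    ∀ n : ℕ,
      Real.exp (-(α / m)) *
        ∑' k : ℕ, dfall lam ((m : ℝ) * k) n * (α / m) ^ k / (Nat.factorial k)
      = (m : ℝ) ^ n * phi n := by
  intro n
  have hm0 : (m : ℝ) ≠ 0 := Nat.cast_ne_zero.2 hm.ne'
  have hscale (k : ℕ) : dfall lam (m * k) n = m ^ n * dfall (lam / m) k n := by
    rw [← dfall_mul_mul, mul_div_cancel₀ _ hm0]
  have hdobinski := iteratedDeriv_exp_mul_rpow_sub_one (α / m) (div_ne_zero hlam hm0) n
  rw [one_div_div, hphi] at hdobinski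
  simp_rw [hscale, mul_assoc (m ^ n : ℝ), mul_div_assoc (m ^ n : ℝ)]
  rw [tsum_mul_left, hdobinski, mul_left_comm]

theorem stmt2 (m : ℕ) (hm : 0 < m) (α lam : ℝ) (hα : 0 < α) (hlam : lam ≠ 0)
    (phi : ℕ → ℝ)
    (hphi : ∀ n : ℕ, iteratedDeriv n
        (fun t : ℝ => Real.exp ((α / m) * ((1 + (lam / m) * t) ^ ((m : ℝ) / lam) - 1))) 0
      = phi n) :
    ∀ n : ℕ,
      Real.exp (-(α / m)) *
        ∑' k : ℕ, dfall lam ((m : ℝ) * k) n * (α / m) ^ k / (Nat.factorial k)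
      = (m : ℝ) ^ n * phi n :=
  stmt2_general m hm α lam hlam phi hphi
end

section
/- For n, r ≥ 0, D^{(r)}_{m,λ}(n,α) = Σ_{j=0}^n C_j(1; -α/m) Σ_{k=j}^n C(n,k) (r-m)_{n-k,λ} S_{2,λ/m}(k,j) m^k. -/
/-!
Write `U t = (1 + λt)^(m/λ) - 1` and `g u = e^(αu/m) (1 + u)`, so that `g^(j)(0) = C_j`. Near `0`
the generating function factors as `g (U t) · (1 + λt)^((r-m)/λ)`, and since `U 0 = 0` the chain
rule gives `(g ∘ U)^(k)(0) = ∑_j g^(j)(0) (U^j/j!)^(k)(0)`. Applied to `g u = (1 + u)^p`, for which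
`g ∘ U = (1 + λt)^(mp/λ)` has `k`-th derivative `(mp)_(k,λ) = m^k (p)_(k,λ/m)` at `0`, the same
formula identifies `(U^j/j!)^(k)(0) = m^k S_(2,λ/m)(k,j)` by comparing coefficients of `(p)_j`.
Leibniz's rule for the product then gives the theorem.
-/

open Finset

open scoped ContDiff Nat Topology

section

variable {𝕜 : Type*} [NontriviallyNormedField 𝕜] {F : Type*} [NormedAddCommGroup F]
  [NormedSpace 𝕜 F]

theorem iteratedDeriv_comp_const_mul' (f : 𝕜 → F) (c : 𝕜) (n : ℕ) :
    iteratedDeriv n (fun t => f (c * t)) = fun t => c ^ n • iteratedDeriv n f (c * t) := by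
  induction n generalizing f with
  | zero => simp
  | succ n ih =>
    funext t
    have hderiv : deriv (fun t => f (c * t)) = fun t => c • deriv f (c * t) :=
      funext fun _ => deriv_comp_mul_left _ _ _
    rw [iteratedDeriv_succ', hderiv, iteratedDeriv_fun_const_smul_field, ih, iteratedDeriv_succ',
      pow_succ', mul_smul]

/-- The number `N > k` of terms is left free so that the induction can pass from `g` to
`deriv g` with one term fewer. -/
theorem iteratedDeriv_comp_eq_sum_pow_div_factorial [CharZero 𝕜] {U : 𝕜 → 𝕜} {x : 𝕜}
    (hU : ContDiffAt 𝕜 ∞ U x) (hUx : U x = 0) {g : 𝕜 → 𝕜} (hg : ContDiff 𝕜 ∞ g) {k N : ℕ}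
    (hkN : k < N) :
    iteratedDeriv k (g ∘ U) x =
      ∑ j ∈ range N, iteratedDeriv j g 0 * iteratedDeriv k (fun t => U t ^ j / j !) x := by
  induction k using Nat.strong_induction_on generalizing g N with
  | _ k ih =>
  obtain ⟨N, rfl⟩ : ∃ N', N = N' + 1 := ⟨N - 1, by omega⟩
  rcases k with _ | k
  · rw [sum_range_succ']
    simp [hUx]
  have hcd {f : 𝕜 → 𝕜} (hf : ContDiffAt 𝕜 ∞ f x) (n : ℕ) : ContDiffAt 𝕜 n f x :=
    hf.of_le (by exact_mod_cast le_top)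
  have hUdiff : ∀ᶠ t in 𝓝 x, DifferentiableAt 𝕜 U t :=
    ((hcd hU 1).eventually (by simp)).mono fun t ht => ht.differentiableAt (by simp)
  have hg' : ContDiff 𝕜 ∞ (deriv g) := (contDiff_infty_iff_deriv.mp hg).2
  have hU' : ContDiffAt 𝕜 ∞ (deriv U) x := hU.derivWithin (by simp)
  have hderiv_comp : deriv (g ∘ U) =ᶠ[𝓝 x] (deriv g ∘ U) * deriv U :=
    hUdiff.mono fun t ht => deriv_comp t (hg.differentiable (by simp) _) ht
  have hderiv_pow (j : ℕ) : deriv (fun t => U t ^ (j + 1) / (j + 1)!) =ᶠ[𝓝 x]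
      (fun t => U t ^ j / j !) * deriv U :=
    hUdiff.mono fun t ht => by
      rw [deriv_div_const, deriv_fun_pow ht, Nat.factorial_succ, Pi.mul_apply]
      push_cast
      field_simp
  calc iteratedDeriv (k + 1) (g ∘ U) x
      = iteratedDeriv k ((deriv g ∘ U) * deriv U) x := by
        rw [iteratedDeriv_succ', hderiv_comp.iteratedDeriv_eq]
    _ = ∑ i ∈ range (k + 1), k.choose i *
          (∑ j ∈ range N,
            iteratedDeriv j (deriv g) 0 * iteratedDeriv i (fun t => U t ^ j / j !) x) *
          iteratedDeriv (k - i) (deriv U) x := by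
        rw [iteratedDeriv_mul (hcd (hg'.contDiffAt.comp x hU) k) (hcd hU' k)]
        refine sum_congr rfl fun i hi => ?_
        rw [ih i (by grind) hg' (N := N) (by grind)]
    _ = ∑ j ∈ range N, iteratedDeriv (j + 1) g 0 *
          iteratedDeriv k ((fun t => U t ^ j / j !) * deriv U) x := by
        simp_rw [mul_sum, sum_mul]
        rw [sum_comm]
        refine sum_congr rfl fun j _ => ?_
        rw [iteratedDeriv_mul (hcd ((hU.pow j).div_const _) k) (hcd hU' k), mul_sum,
          iteratedDeriv_succ']
        exact sum_congr rfl fun _ _ => by ring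
    _ = ∑ j ∈ range (N + 1), iteratedDeriv j g 0 *
          iteratedDeriv (k + 1) (fun t => U t ^ j / j !) x := by
        rw [sum_range_succ']
        simp only [iteratedDeriv_succ' (n := k), (hderiv_pow _).iteratedDeriv_eq]
        simp

end

theorem eq_of_sum_mul_descFactorial_eq {R : Type*} [Ring R] [NoZeroDivisors R] [CharZero R]
    {N : ℕ} {c d : ℕ → R}
    (h : ∀ p : ℕ,
      ∑ j ∈ range N, c j * p.descFactorial j = ∑ j ∈ range N, d j * p.descFactorial j) :
    ∀ j < N, c j = d j := by
  have hsub (p : ℕ) : ∑ j ∈ range N, (c j - d j) * p.descFactorial j = 0 := by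
    simp only [sub_mul, sum_sub_distrib, h, sub_self]
  intro j
  induction j using Nat.strong_induction_on with
  | _ j ih =>
  intro hj
  have hsingle : ∑ i ∈ range N, (c i - d i) * j.descFactorial i = (c j - d j) * j ! := by
    rw [sum_eq_single_of_mem j (mem_range.mpr hj), Nat.descFactorial_self]
    intro i hi hij
    rcases lt_or_gt_of_ne hij with hlt | hgt
    · rw [ih i hlt (hlt.trans hj), sub_self, zero_mul]
    · rw [Nat.descFactorial_eq_zero_iff_lt.mpr hgt, Nat.cast_zero, mul_zero]
  rw [hsub, eq_comm, mul_eq_zero] at hsingle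
  exact sub_eq_zero.mp (hsingle.resolve_right (by exact_mod_cast j.factorial_ne_zero))

theorem ffall_natCast (p j : ℕ) : ffall p j = p.descFactorial j := by
  rw [ffall, ← descPochhammer_eval_eq_prod_range, descPochhammer_eval_eq_descFactorial]

theorem dfall_eq_pow_mul_descPochhammer {lam : ℝ} (hlam : lam ≠ 0) (x : ℝ) (n : ℕ) :
    dfall lam x n = lam ^ n * (descPochhammer ℝ n).eval (x / lam) := by
  rw [dfall, descPochhammer_eval_eq_prod_range]
  calc ∏ i ∈ range n, (x - i * lam) = ∏ i ∈ range n, lam * (x / lam - i) :=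
        prod_congr rfl fun i _ => by field_simp
    _ = _ := by rw [prod_mul_distrib, prod_const, card_range]

theorem dfall_mul_left {μ : ℝ} (hμ : μ ≠ 0) (lam x : ℝ) (n : ℕ) :
    dfall lam (μ * x) n = μ ^ n * dfall (lam / μ) x n := by
  calc dfall lam (μ * x) n = ∏ i ∈ range n, μ * (x - i * (lam / μ)) :=
        prod_congr rfl fun i _ => by field_simp
    _ = _ := by rw [prod_mul_distrib, prod_const, card_range, dfall]

theorem eventually_pos_one_add_mul (lam : ℝ) : ∀ᶠ t in 𝓝 (0 : ℝ), 0 < 1 + lam * t :=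
  ContinuousAt.eventually_lt (f := fun _ => 0) continuousAt_const (by fun_prop) (by simp)

theorem contDiffAt_one_add_mul_rpow (lam c : ℝ) :
    ContDiffAt ℝ ∞ (fun t => (1 + lam * t) ^ c) 0 :=
  (contDiffAt_const.add (contDiffAt_const.mul contDiffAt_id)).rpow_const_of_ne (by simp)

theorem iteratedDeriv_one_add_mul_rpow_zero (lam c : ℝ) (n : ℕ) :
    iteratedDeriv n (fun t => (1 + lam * t) ^ c) 0 = lam ^ n * (descPochhammer ℝ n).eval c := by
  have h := iteratedDeriv_comp_const_mul' (fun u : ℝ => (1 + u) ^ c) lam n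
  simp only [smul_eq_mul] at h
  simp [h, iteratedDeriv_comp_const_add n (fun u : ℝ => u ^ c), iteratedDeriv_eq_iterate,
    Real.iter_deriv_rpow_const]

theorem iteratedDeriv_one_add_mul_rpow_div_zero {lam : ℝ} (hlam : lam ≠ 0) (x : ℝ) (n : ℕ) :
    iteratedDeriv n (fun t => (1 + lam * t) ^ (x / lam)) 0 = dfall lam x n := by
  rw [iteratedDeriv_one_add_mul_rpow_zero, dfall_eq_pow_mul_descPochhammer hlam]

theorem iteratedDeriv_one_add_mul_rpow_sub_one_pow_div_factorial_zero {lam μ : ℝ} (hlam : lam ≠ 0)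
    (hμ : μ ≠ 0) {k : ℕ} {S : ℕ → ℝ}
    (hS : ∀ p : ℕ, dfall (lam / μ) p k = ∑ i ∈ range (k + 1), S i * ffall p i) {j : ℕ}
    (hjk : j ≤ k) :
    iteratedDeriv k (fun t => ((1 + lam * t) ^ (μ / lam) - 1) ^ j / j !) 0 = S j * μ ^ k := by
  set U : ℝ → ℝ := fun t => (1 + lam * t) ^ (μ / lam) - 1
  have hU : ContDiffAt ℝ ∞ U 0 := (contDiffAt_one_add_mul_rpow lam _).sub contDiffAt_const
  have hU0 : U 0 = 0 := by simp [U]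
  refine eq_of_sum_mul_descFactorial_eq (c := fun i => iteratedDeriv k (fun t => U t ^ i / i !) 0)
    (d := fun i => S i * μ ^ k) (fun p => ?_) j (Nat.lt_succ_of_le hjk)
  have hcomp := iteratedDeriv_comp_eq_sum_pow_div_factorial hU hU0
    (g := fun u => (1 + u) ^ p) (by fun_prop) (lt_add_one k)
  have hg (i : ℕ) : iteratedDeriv i (fun u : ℝ => (1 + u) ^ p) 0 = p.descFactorial i := by
    simp [iteratedDeriv_comp_const_add i (fun u : ℝ => u ^ p)]
  have hpow : (fun u : ℝ => (1 + u) ^ p) ∘ U =ᶠ[𝓝 0]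
      fun t => (1 + lam * t) ^ ((μ * p) / lam) := by
    filter_upwards [eventually_pos_one_add_mul lam] with t ht
    simp only [Function.comp_apply, U, add_sub_cancel, mul_div_right_comm μ,
      Real.rpow_mul_natCast ht.le]
  calc ∑ i ∈ range (k + 1), iteratedDeriv k (fun t => U t ^ i / i !) 0 * p.descFactorial i
      = iteratedDeriv k ((fun u : ℝ => (1 + u) ^ p) ∘ U) 0 := by
        rw [hcomp]
        exact sum_congr rfl fun i _ => by rw [hg, mul_comm]
    _ = dfall lam (μ * p) k := by
        rw [hpow.iteratedDeriv_eq, iteratedDeriv_one_add_mul_rpow_div_zero hlam]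
    _ = ∑ i ∈ range (k + 1), S i * μ ^ k * p.descFactorial i := by
        rw [dfall_mul_left hμ, hS, mul_sum]
        exact sum_congr rfl fun i _ => by rw [ffall_natCast]; ring

theorem stmt13 (m : ℕ) (hm : 0 < m) (r : ℕ) (α lam : ℝ) (hlam : lam ≠ 0)
    (D : ℕ → ℝ)
    (hD : ∀ n : ℕ, iteratedDeriv n
        (fun t : ℝ => (1 + lam * t) ^ ((r : ℝ) / lam) *
          Real.exp ((α / m) * ((1 + lam * t) ^ ((m : ℝ) / lam) - 1))) 0 = D n)
    (C : ℕ → ℝ)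
    (hC : ∀ k : ℕ, iteratedDeriv k
        (fun t : ℝ => Real.exp ((α / m) * t) * (1 + t) ^ (1 : ℝ)) 0 = C k)
    (S : ℕ → ℕ → ℝ)
    (hS : ∀ (x : ℝ) (N : ℕ),
      dfall (lam / m) x N = ∑ k ∈ Finset.range (N + 1), S N k * ffall x k)
    (n : ℕ) :
    D n = ∑ j ∈ Finset.range (n + 1), C j *
        ∑ k ∈ Finset.Icc j n,
          (n.choose k : ℝ) * dfall lam ((r : ℝ) - m) (n - k) * S k j * (m : ℝ) ^ k := by
  set g : ℝ → ℝ := fun u => Real.exp ((α / m) * u) * (1 + u) ^ (1 : ℝ)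
  set U : ℝ → ℝ := fun t => (1 + lam * t) ^ ((m : ℝ) / lam) - 1
  set G : ℝ → ℝ := fun t => (1 + lam * t) ^ (((r : ℝ) - m) / lam)
  have hg : ContDiff ℝ ∞ g := by simp only [g, Real.rpow_one]; fun_prop
  have hU : ContDiffAt ℝ ∞ U 0 := (contDiffAt_one_add_mul_rpow lam _).sub contDiffAt_const
  have hfactor : (fun t : ℝ => (1 + lam * t) ^ ((r : ℝ) / lam) *
      Real.exp ((α / m) * ((1 + lam * t) ^ ((m : ℝ) / lam) - 1))) =ᶠ[𝓝 0] (g ∘ U) * G := by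
    filter_upwards [eventually_pos_one_add_mul lam] with t ht
    simp only [Pi.mul_apply, Function.comp_apply, g, U, G, Real.rpow_one, add_sub_cancel]
    rw [mul_assoc, ← Real.rpow_add ht, ← add_div, add_sub_cancel, mul_comm]
  have hgU (k : ℕ) :
      iteratedDeriv k (g ∘ U) 0 = ∑ j ∈ range (k + 1), C j * (S k j * m ^ k) := by
    rw [iteratedDeriv_comp_eq_sum_pow_div_factorial hU (by simp [U]) hg (lt_add_one k)]
    refine sum_congr rfl fun j hj => ?_
    rw [hC, iteratedDeriv_one_add_mul_rpow_sub_one_pow_div_factorial_zero hlam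
      (Nat.cast_ne_zero.mpr hm.ne') (hS · k) (mem_range_succ_iff.mp hj)]
  rw [← hD, hfactor.iteratedDeriv_eq,
    iteratedDeriv_mul ((hg.contDiffAt.comp 0 hU).of_le (by exact_mod_cast le_top))
      ((contDiffAt_one_add_mul_rpow lam _).of_le (by exact_mod_cast le_top))]
  simp_rw [hgU, iteratedDeriv_one_add_mul_rpow_div_zero hlam, mul_sum, sum_mul]
  rw [sum_comm' (t' := range (n + 1)) (s' := fun j => Icc j n) (by intros; simp only [mem_range, mem_Icc]; omega)]
  exact sum_congr rfl fun _ _ => sum_congr rfl fun _ _ => by ring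
end
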